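/- arXiv:1509.03626 — 4 statements merged into one kernel-verified Lean document; each statement's English description precedes it below -/
import Mathlib

section
/- Let Λ be a connected simple graph with nonempty vertex set V and let G be a group. A G-valued gauge field φ on Λ is flat (its holonomy along every closed walk equals 1) if and only if there exists f : V → G such that φ(u,v) = (f u)⁻¹·(f v) for every pair of adjacent vertices u, v. -/
/-- A `G`-valued gauge field on a simple graph assigns a group element to every ordered pair
of adjacent vertices (i.e. to every dart), with reversed darts getting inverse values. -/
def IsGaugeField {V : Type*} {G : Type*} [Group G] {Λ : SimpleGraph V}
    (φ : Λ.Dart → G) : Prop :=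
  ∀ d : Λ.Dart, φ d.symm = (φ d)⁻¹

/-- The holonomy of a gauge field along a walk `u₀ ∼ u₁ ∼ ⋯ ∼ u_k` is the ordered product
`φ(u₀,u₁)·φ(u₁,u₂)⋯φ(u_{k−1},u_k)`. -/
def holonomy {V : Type*} {G : Type*} [Group G] {Λ : SimpleGraph V}
    (φ : Λ.Dart → G) {u v : V} (p : Λ.Walk u v) : G :=
  (p.darts.map φ).prod

/-- A gauge field is flat if its holonomy along every closed walk equals `1`. -/
def IsFlat {V : Type*} {G : Type*} [Group G] {Λ : SimpleGraph V}
    (φ : Λ.Dart → G) : Prop :=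
  ∀ (u : V) (p : Λ.Walk u u), holonomy φ p = 1

lemma holonomy_append {V : Type*} {G : Type*} [Group G] {Λ : SimpleGraph V}
    (φ : Λ.Dart → G) {u v w : V} (p : Λ.Walk u v) (q : Λ.Walk v w) :
    holonomy φ (p.append q) = holonomy φ p * holonomy φ q := by
  simp [holonomy, SimpleGraph.Walk.darts_append]

lemma holonomy_reverse {V : Type*} {G : Type*} [Group G] {Λ : SimpleGraph V}
    (φ : Λ.Dart → G) (hφ : IsGaugeField φ) {u v : V} (p : Λ.Walk u v) :
    holonomy φ p.reverse = (holonomy φ p)⁻¹ := by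
  induction p with
  | nil => simp [holonomy]
  | cons h p ih =>
    rw [SimpleGraph.Walk.reverse_cons, holonomy_append, ih]
    simp only [holonomy, SimpleGraph.Walk.darts_cons, List.map_cons, List.prod_cons,
      SimpleGraph.Walk.darts_nil, List.map_nil, List.prod_nil, mul_one, mul_inv_rev]
    congr 1
    exact hφ ⟨(_, _), h⟩

/-- On a connected simple graph with nonempty vertex set, a `G`-valued gauge
field is flat if and only if it is a pure gauge: `φ(u,v) = (f u)⁻¹ * (f v)` on adjacent pairs,
for some `f : V → G`. -/
theorem isFlat_iff_exists_pure_gauge {V : Type*} {G : Type*} [Group G]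
    (Λ : SimpleGraph V) (hΛ : Λ.Connected) (φ : Λ.Dart → G) (hφ : IsGaugeField φ) :
    IsFlat φ ↔ ∃ f : V → G, ∀ d : Λ.Dart, φ d = (f d.fst)⁻¹ * f d.snd := by
  constructor
  · intro hflat
    obtain ⟨v₀⟩ := hΛ.nonempty
    classical
    let f : V → G := fun u => holonomy φ (hΛ.preconnected v₀ u).some
    refine ⟨f, fun d => ?_⟩
    have key : holonomy φ
        (((hΛ.preconnected v₀ d.fst).some.append
          (SimpleGraph.Walk.cons d.adj SimpleGraph.Walk.nil)).append
          (hΛ.preconnected v₀ d.snd).some.reverse) = 1 := hflat v₀ _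
    rw [holonomy_append, holonomy_append, holonomy_reverse φ hφ] at key
    have hd : holonomy φ (SimpleGraph.Walk.cons d.adj SimpleGraph.Walk.nil) = φ d := by
      simp [holonomy]
    rw [hd] at key
    have : f d.fst * φ d = f d.snd := by
      have := mul_eq_one_iff_eq_inv.mp key
      simpa [f] using this
    rw [← this]
    group
  · rintro ⟨f, hf⟩ u p
    have gen : ∀ {a b : V} (q : Λ.Walk a b), holonomy φ q = (f a)⁻¹ * f b := by
      intro a b q
      induction q with
      | nil => simp [holonomy]
      | cons h q ih =>
        simp only [holonomy, SimpleGraph.Walk.darts_cons, List.map_cons, List.prod_cons] at *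
        rw [ih, hf ⟨(_, _), h⟩]
        group
    rw [gen p]
    group
end

section
/- Let G be a finite abelian group, Circle the multiplicative group of complex numbers of modulus 1, n ≥ 2, and let ω : Gⁿ → Circle be an inhomogeneous n-cocycle. Then for every g ∈ G the slant product ω^{(g)} : G^{n−1} → Circle, defined by ω^{(g)}(g₁,…,g_{n−1}) = ω(g,g₁,…,g_{n−1}) · ∏_{i=1}^{n−1} ω(g₁,…,g_i, g, g_{i+1},…,g_{n−1})^{(−1)^i}, is an inhomogeneous (n−1)-cocycle. -/
/-- The inhomogeneous `n`-cocycle condition. -/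
def IsInhomoCocycle {G : Type*} [Group G] {n : ℕ} (ω : (Fin n → G) → Circle) : Prop :=
  ∀ g : Fin (n + 1) → G,
    (ω fun i => g i.succ) *
      (∏ j : Fin n,
        (ω (Fin.contractNth j.castSucc (· * ·) g)) ^ ((-1 : ℤ) ^ ((j : ℕ) + 1))) *
      (ω fun i => g i.castSucc) ^ ((-1 : ℤ) ^ (n + 1)) = 1

/-- The slant product `i_g ω = ω^{(g)}` of an inhomogeneous cochain of `n+1` variables:
`ω^{(g)}(g₁,…,g_n) = ω(g,g₁,…,g_n) · ∏_{i=1}^{n} ω(g₁,…,g_i, g, g_{i+1},…,g_n)^{(−1)^i}`. -/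
noncomputable def slant {G : Type*} [Group G] {n : ℕ} (g : G) (ω : (Fin (n + 1) → G) → Circle) :
    (Fin n → G) → Circle :=
  fun v => ω (Fin.cons g v) *
    ∏ i : Fin n, (ω (Fin.insertNth i.succ g v)) ^ ((-1 : ℤ) ^ ((i : ℕ) + 1))

/-! ### Auxiliary lemmas -/

theorem negpow {a b : ℕ} (h : a % 2 = b % 2) : (-1:ℤ)^a = (-1:ℤ)^b := by
  rcases Nat.even_or_odd a with ha | ha
  · rw [ha.neg_one_pow, (Nat.even_iff.2 (by rw [← Nat.even_iff.1 ha]; omega)).neg_one_pow]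
  · rw [ha.neg_one_pow, (Nat.odd_iff.2 (by rw [← Nat.odd_iff.1 ha]; omega)).neg_one_pow]

theorem insApp {α : Type*} {n : ℕ} (p : Fin (n+1)) (g : α) (v : Fin n → α) (i : Fin (n+1)) :
    Fin.insertNth (α := fun _ => α) p g v i =
      if h : (i:ℕ) < (p:ℕ) then v ⟨i, by omega⟩
      else if h' : (p:ℕ) < (i:ℕ) then v ⟨(i:ℕ)-1, by omega⟩ else g := by
  rcases lt_trichotomy ((i:ℕ)) ((p:ℕ)) with h | h | h
  · rw [dif_pos h]
    have hi : (i:ℕ) < n := by omega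
    have e : i = p.succAbove ⟨i, hi⟩ := by
      rw [Fin.succAbove_of_castSucc_lt p ⟨i, hi⟩ (by simp [Fin.lt_def, h])]
      exact Fin.ext rfl
    have := Fin.insertNth_apply_succAbove (α := fun _ => α) p g v ⟨i, hi⟩
    rw [← e] at this
    exact this
  · have e : i = p := Fin.ext h
    subst e
    rw [Fin.insertNth_apply_same, dif_neg (by omega), dif_neg (by omega)]
  · rw [dif_neg (by omega), dif_pos h]
    have hi : (i:ℕ) - 1 < n := by omega
    have e : i = p.succAbove ⟨(i:ℕ)-1, hi⟩ := by
      rw [Fin.succAbove_of_le_castSucc p _ (by simp [Fin.le_def]; omega)]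
      exact Fin.ext (by simp; omega)
    have := Fin.insertNth_apply_succAbove (α := fun _ => α) p g v ⟨(i:ℕ)-1, hi⟩
    rw [← e] at this
    exact this

section Structural

variable {G : Type*} [Mul G]

theorem ins0_cons {n : ℕ} (g : G) (v : Fin n → G) :
    Fin.insertNth (α := fun _ => G) 0 g v = Fin.cons g v := by
  funext k
  refine Fin.cases ?_ ?_ k
  · simp [insApp]
  · intro i
    simp only [insApp, Fin.val_succ, Fin.val_zero, Fin.cons_succ]
    split_ifs <;>
      first
        | omega
        | exact congrArg v (Fin.ext (by first | omega | (simp <;> omega)))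

theorem tail_ins0 {n : ℕ} (g : G) (v : Fin (n+1) → G) :
    (fun i : Fin (n+1) => Fin.insertNth (α := fun _ => G) (0 : Fin (n+2)) g v i.succ) = v := by
  funext k
  simp only [insApp, Fin.val_succ, Fin.val_zero]
  split_ifs <;>
    first
      | rfl
      | omega
      | exact congrArg v (Fin.ext (by first | omega | (simp <;> omega)))

theorem tail_ins {n : ℕ} (g : G) (v : Fin (n+1) → G) (q : Fin (n+1)) :
    (fun i : Fin (n+1) => Fin.insertNth (α := fun _ => G) q.succ g v i.succ)
      = Fin.insertNth (α := fun _ => G) q g (fun i : Fin n => v i.succ) := by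
  funext k
  simp only [insApp, Fin.val_succ]
  split_ifs <;>
    first
      | rfl
      | omega
      | exact congrArg v (Fin.ext (by first | omega | (simp <;> omega)))

theorem init_insLast {n : ℕ} (g : G) (v : Fin (n+1) → G) :
    (fun i : Fin (n+1) => Fin.insertNth (α := fun _ => G) (Fin.last (n+1)) g v i.castSucc) = v := by
  funext k
  simp only [insApp, Fin.coe_castSucc, Fin.val_last]
  split_ifs <;>
    first
      | rfl
      | omega
      | exact congrArg v (Fin.ext (by first | omega | (simp <;> omega)))

theorem init_ins {n : ℕ} (g : G) (v : Fin (n+1) → G) (q : Fin (n+1)) :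
    (fun i : Fin (n+1) => Fin.insertNth (α := fun _ => G) q.castSucc g v i.castSucc)
      = Fin.insertNth (α := fun _ => G) q g (fun i : Fin n => v i.castSucc) := by
  funext k
  simp only [insApp, Fin.coe_castSucc]
  split_ifs <;>
    first
      | rfl
      | omega
      | exact congrArg v (Fin.ext (by first | omega | (simp <;> omega)))

theorem contract_ins_lt {n : ℕ} (g : G) (v : Fin (n+1) → G) (p : Fin (n+2)) (j : Fin (n+1))
    (h : (j:ℕ) + 1 < p) :
    Fin.contractNth j.castSucc (· * ·) (Fin.insertNth p g v)
      = Fin.insertNth (α := fun _ => G) (⟨(p:ℕ)-1, by omega⟩ : Fin (n+1)) g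
          (Fin.contractNth (⟨(j:ℕ), by omega⟩ : Fin n).castSucc (· * ·) v) := by
  funext k
  simp only [Fin.contractNth, insApp, Fin.coe_castSucc, Fin.val_succ]
  split_ifs <;>
    first
      | rfl
      | omega
      | exact congrArg v (Fin.ext (by first | omega | (simp <;> omega)))
      | (congr 1 <;>
          first
            | rfl
            | exact congrArg v (Fin.ext (by first | omega | (simp <;> omega))))

theorem contract_ins_gt {n : ℕ} (g : G) (v : Fin (n+1) → G) (p : Fin (n+2)) (j : Fin (n+1))
    (h : (p:ℕ) < j) :
    Fin.contractNth j.castSucc (· * ·) (Fin.insertNth p g v)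
      = Fin.insertNth (α := fun _ => G) (⟨(p:ℕ), by omega⟩ : Fin (n+1)) g
          (Fin.contractNth (⟨(j:ℕ)-1, by omega⟩ : Fin n).castSucc (· * ·) v) := by
  funext k
  simp only [Fin.contractNth, insApp, Fin.coe_castSucc, Fin.val_succ]
  split_ifs <;>
    first
      | rfl
      | omega
      | exact congrArg v (Fin.ext (by first | omega | (simp <;> omega)))
      | (congr 1 <;>
          first
            | rfl
            | exact congrArg v (Fin.ext (by first | omega | (simp <;> omega))))

theorem contract_ins_diag1 {n : ℕ} (g : G) (v : Fin (n+1) → G) (j : Fin (n+1)) :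
    Fin.contractNth j.castSucc (· * ·) (Fin.insertNth j.succ g v)
      = Function.update v j (v j * g) := by
  funext k
  simp only [Fin.contractNth, insApp, Fin.coe_castSucc, Fin.val_succ, Function.update_apply,
    Fin.ext_iff]
  split_ifs <;>
    first
      | rfl
      | omega
      | exact congrArg v (Fin.ext (by first | omega | (simp <;> omega)))
      | (congr 1 <;>
          first
            | rfl
            | exact congrArg v (Fin.ext (by first | omega | (simp <;> omega))))

theorem contract_ins_diag2 {n : ℕ} (g : G) (v : Fin (n+1) → G) (j : Fin (n+1)) :
    Fin.contractNth j.castSucc (· * ·) (Fin.insertNth j.castSucc g v)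
      = Function.update v j (g * v j) := by
  funext k
  simp only [Fin.contractNth, insApp, Fin.coe_castSucc, Fin.val_succ, Function.update_apply,
    Fin.ext_iff]
  split_ifs <;>
    first
      | rfl
      | omega
      | exact congrArg v (Fin.ext (by first | omega | (simp <;> omega)))
      | (congr 1 <;>
          first
            | rfl
            | exact congrArg v (Fin.ext (by first | omega | (simp <;> omega))))

end Structural

/-! ### The coboundary operator and the slant product, with values in any commutative group -/

def Del {G : Type*} [Group G] {M : Type*} [CommGroup M] {n : ℕ} (f : (Fin n → G) → M) :
    (Fin (n + 1) → G) → M :=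
  fun g => (f fun i => g i.succ) *
    (∏ j : Fin n,
      (f (Fin.contractNth j.castSucc (· * ·) g)) ^ ((-1 : ℤ) ^ ((j : ℕ) + 1))) *
    (f fun i => g i.castSucc) ^ ((-1 : ℤ) ^ (n + 1))

def Sl {G : Type*} [Group G] {M : Type*} [CommGroup M] {n : ℕ} (g : G)
    (f : (Fin (n + 1) → G) → M) : (Fin n → G) → M :=
  fun v => ∏ p : Fin (n + 1), (f (Fin.insertNth p g v)) ^ ((-1 : ℤ) ^ (p : ℕ))

theorem prodZ {M : Type*} [CommGroup M] {ι : Type*} (s : Finset ι) (f : ι → M) (z : ℤ) :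
    (∏ i ∈ s, f i) ^ z = ∏ i ∈ s, (f i) ^ z := by
  first
  | exact Finset.prod_zpow f s z
  | exact map_prod (zpowGroupHom z) f s

theorem prod_shift {M : Type*} [CommGroup M] {m : ℕ} (F : Fin (m+1) → M) :
    ∏ p : Fin (m+1), (F p) ^ ((-1:ℤ)^(p:ℕ))
      = F 0 * (∏ q : Fin m, (F q.succ) ^ ((-1:ℤ)^(q:ℕ)))⁻¹ := by
  rw [Fin.prod_univ_succ]
  congr 1
  · simp
  · rw [← Finset.prod_inv_distrib]
    apply Finset.prod_congr rfl
    intro q _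
    rw [Fin.val_succ, pow_succ, zpow_mul, zpow_neg_one]

theorem prod_last {M : Type*} [CommGroup M] {m : ℕ} (F : Fin (m+1) → M) :
    ∏ p : Fin (m+1), (F p) ^ ((-1:ℤ)^(p:ℕ))
      = (∏ q : Fin m, (F q.castSucc) ^ ((-1:ℤ)^(q:ℕ))) * (F (Fin.last m)) ^ ((-1:ℤ)^m) := by
  rw [Fin.prod_univ_castSucc]
  simp

/-! ### The three main computations -/

section Main

variable {G : Type*} [CommGroup G] {M : Type*} [CommGroup M]

theorem HA {n : ℕ} (g : G) (f : (Fin (n+1) → G) → M) (v : Fin (n+1) → G) :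
    ∏ p : Fin (n+2), (f fun i => Fin.insertNth (α := fun _ => G) p g v i.succ) ^ ((-1:ℤ)^(p:ℕ))
      = f v * (∏ q : Fin (n+1),
          (f (Fin.insertNth q g fun i => v i.succ)) ^ ((-1:ℤ)^(q:ℕ)))⁻¹ := by
  rw [prod_shift (fun p => f fun i => Fin.insertNth (α := fun _ => G) p g v i.succ)]
  rw [tail_ins0 g v]
  congr 2
  apply Finset.prod_congr rfl
  intro q _
  rw [tail_ins g v q]

theorem HC {n : ℕ} (g : G) (f : (Fin (n+1) → G) → M) (v : Fin (n+1) → G) :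
    ∏ p : Fin (n+2), ((f fun i => Fin.insertNth (α := fun _ => G) p g v i.castSucc)
        ^ ((-1:ℤ)^(n+1+1))) ^ ((-1:ℤ)^(p:ℕ))
      = (f v)⁻¹ * ((∏ q : Fin (n+1),
          (f (Fin.insertNth q g fun i => v i.castSucc)) ^ ((-1:ℤ)^(q:ℕ)))
            ^ ((-1:ℤ)^(n+1)))⁻¹ := by
  have step : ∀ p : Fin (n+2),
      ((f fun i => Fin.insertNth (α := fun _ => G) p g v i.castSucc) ^ ((-1:ℤ)^(n+1+1))) ^ ((-1:ℤ)^(p:ℕ))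
        = ((f fun i => Fin.insertNth (α := fun _ => G) p g v i.castSucc) ^ ((-1:ℤ)^(p:ℕ))) ^ ((-1:ℤ)^(n+1+1)) := by
    intro p
    rw [← zpow_mul, ← zpow_mul, mul_comm]
  rw [Finset.prod_congr rfl (fun p _ => step p),
    ← prodZ Finset.univ
      (fun p : Fin (n+2) =>
        (f fun i => Fin.insertNth (α := fun _ => G) p g v i.castSucc) ^ ((-1:ℤ)^(p:ℕ)))
      ((-1:ℤ)^(n+1+1)),
    prod_last (fun p => f fun i => Fin.insertNth (α := fun _ => G) p g v i.castSucc)]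
  have hinner : (∏ q : Fin (n+1),
        (f fun i => Fin.insertNth (α := fun _ => G) q.castSucc g v i.castSucc) ^ ((-1:ℤ)^(q:ℕ)))
      = ∏ q : Fin (n+1), (f (Fin.insertNth q g fun i => v i.castSucc)) ^ ((-1:ℤ)^(q:ℕ)) := by
    apply Finset.prod_congr rfl
    intro q _
    congr 1
    exact congrArg f (init_ins g v q)
  have hlast : (f fun i => Fin.insertNth (α := fun _ => G) (Fin.last (n+1)) g v i.castSucc) = f v :=
    congrArg f (init_insLast g v)
  rw [hinner, hlast]
  rcases Nat.even_or_odd (n+1) with h | h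
  · have E1 : (-1:ℤ)^(n+1) = 1 := h.neg_one_pow
    have E2 : (-1:ℤ)^(n+1+1) = -1 := by rw [pow_succ, E1]; ring
    rw [E1, E2]
    simp only [zpow_one, zpow_neg_one, mul_inv, inv_inv]
    exact mul_comm _ _
  · have E1 : (-1:ℤ)^(n+1) = -1 := h.neg_one_pow
    have E2 : (-1:ℤ)^(n+1+1) = 1 := by rw [pow_succ, E1]; ring
    rw [E1, E2]
    simp only [zpow_one, zpow_neg_one, mul_inv, inv_inv]
    exact mul_comm _ _

end Main

/-! ### The middle terms -/

section Main2

variable {G : Type*} [CommGroup G] {M : Type*} [CommGroup M]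

def TT {n : ℕ} (g : G) (f : (Fin (n+1) → G) → M) (v : Fin (n+1) → G)
    (x : Fin (n+2) × Fin (n+1)) : M :=
  (f (Fin.contractNth x.2.castSucc (· * ·) (Fin.insertNth x.1 g v)))
    ^ ((-1:ℤ)^((x.1:ℕ)+(x.2:ℕ)+1))

def QQ {n : ℕ} (g : G) (f : (Fin (n+1) → G) → M) (v : Fin (n+1) → G)
    (y : Fin n × Fin (n+1)) : M :=
  (f (Fin.insertNth y.2 g (Fin.contractNth y.1.castSucc (· * ·) v)))
    ^ ((-1:ℤ)^((y.1:ℕ)+(y.2:ℕ)+1))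

def QQ' {n : ℕ} (g : G) (f : (Fin (n+1) → G) → M) (v : Fin (n+1) → G)
    (y : Fin n × Fin (n+1)) : M :=
  (f (Fin.insertNth y.2 g (Fin.contractNth y.1.castSucc (· * ·) v)))
    ^ ((-1:ℤ)^((y.1:ℕ)+(y.2:ℕ)))

theorem hd1 {n : ℕ} (g : G) (f : (Fin (n+1) → G) → M) (v : Fin (n+1) → G) :
    ∏ x ∈ ((Finset.univ.filter
        fun x : Fin (n+2) × Fin (n+1) => ¬((x.2:ℕ)+1 < (x.1:ℕ))).filter
        fun x => (x.2:ℕ)+1 = (x.1:ℕ)), TT g f v x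
      = ∏ j : Fin (n+1), f (Function.update v j (v j * g)) := by
  refine Finset.prod_bij' (fun x _ => x.2) (fun j _ => (j.succ, j)) ?_ ?_ ?_ ?_ ?_
  · intro a _; exact Finset.mem_univ _
  · intro j _
    simp only [Finset.mem_filter, Finset.mem_univ, true_and, Fin.val_succ, Fin.coe_castSucc]
    first | omega | (simp <;> omega) | simp
  · intro a ha
    simp only [Finset.mem_filter, Finset.mem_univ, true_and] at ha
    exact Prod.ext (Fin.ext (by first | omega | (simp <;> omega))) rfl
  · intro j _; rfl
  · intro a ha
    simp only [Finset.mem_filter, Finset.mem_univ, true_and] at ha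
    have h2 : a.1 = a.2.succ := Fin.ext (by first | omega | (simp <;> omega))
    unfold TT
    rw [h2, contract_ins_diag1]
    have he : (-1:ℤ)^(((a.2.succ : Fin (n+2)):ℕ)+(a.2:ℕ)+1) = 1 :=
      Even.neg_one_pow ⟨(a.2:ℕ)+1, by simp [Fin.val_succ]; ring⟩
    rw [he, zpow_one]

theorem hd2 {n : ℕ} (g : G) (f : (Fin (n+1) → G) → M) (v : Fin (n+1) → G) :
    ∏ x ∈ (((Finset.univ.filter
        fun x : Fin (n+2) × Fin (n+1) => ¬((x.2:ℕ)+1 < (x.1:ℕ))).filter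
        fun x => ¬((x.2:ℕ)+1 = (x.1:ℕ))).filter
        fun x => (x.2:ℕ) = (x.1:ℕ)), TT g f v x
      = ∏ j : Fin (n+1), (f (Function.update v j (v j * g)))⁻¹ := by
  refine Finset.prod_bij' (fun x _ => x.2) (fun j _ => (j.castSucc, j)) ?_ ?_ ?_ ?_ ?_
  · intro a _; exact Finset.mem_univ _
  · intro j _
    simp only [Finset.mem_filter, Finset.mem_univ, true_and, Fin.val_succ, Fin.coe_castSucc]
    first | omega | (simp <;> omega) | simp
  · intro a ha
    simp only [Finset.mem_filter, Finset.mem_univ, true_and] at ha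
    exact Prod.ext (Fin.ext (by first | omega | (simp <;> omega))) rfl
  · intro j _; rfl
  · intro a ha
    simp only [Finset.mem_filter, Finset.mem_univ, true_and] at ha
    have h2 : a.1 = a.2.castSucc := Fin.ext (by first | omega | (simp <;> omega))
    unfold TT
    rw [h2, contract_ins_diag2, mul_comm g (v a.2)]
    have he : (-1:ℤ)^(((a.2.castSucc : Fin (n+2)):ℕ)+(a.2:ℕ)+1) = -1 :=
      Odd.neg_one_pow ⟨(a.2:ℕ), by simp [Fin.coe_castSucc]; ring⟩
    rw [he, zpow_neg_one]

theorem hlt {n : ℕ} (g : G) (f : (Fin (n+1) → G) → M) (v : Fin (n+1) → G) :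
    ∏ x ∈ (Finset.univ.filter
        fun x : Fin (n+2) × Fin (n+1) => (x.2:ℕ)+1 < (x.1:ℕ)), TT g f v x
      = ∏ y ∈ (Finset.univ.filter
        fun y : Fin n × Fin (n+1) => (y.1:ℕ) < (y.2:ℕ)), QQ' g f v y := by
  refine Finset.prod_bij'
    (fun x hx => ((⟨(x.2:ℕ), by
        have h := (Finset.mem_filter.1 hx).2
        have := x.1.isLt
        omega⟩ : Fin n),
      (⟨(x.1:ℕ)-1, by have := x.1.isLt; omega⟩ : Fin (n+1))))
    (fun y _ => (y.2.succ, y.1.castSucc)) ?_ ?_ ?_ ?_ ?_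
  · intro a ha
    have h := (Finset.mem_filter.1 ha).2
    simp only [Finset.mem_filter, Finset.mem_univ, true_and]
    first | omega | (simp <;> omega) | simp
  · intro y hy
    have h := (Finset.mem_filter.1 hy).2
    simp only [Finset.mem_filter, Finset.mem_univ, true_and, Fin.val_succ, Fin.coe_castSucc]
    first | omega | (simp <;> omega) | simp
  · intro a ha
    have h := (Finset.mem_filter.1 ha).2
    exact Prod.ext (Fin.ext (by first | omega | (simp <;> omega))) (Fin.ext (by first | (simp <;> omega) | simp))
  · intro y hy
    exact Prod.ext (Fin.ext (by first | (simp <;> omega) | simp)) (Fin.ext (by first | (simp <;> omega) | simp))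
  · intro a ha
    have h := (Finset.mem_filter.1 ha).2
    unfold TT QQ'
    rw [contract_ins_lt g v a.1 a.2 h]
    congr 1
    exact negpow (by first | omega | (simp <;> omega))

theorem hgt {n : ℕ} (g : G) (f : (Fin (n+1) → G) → M) (v : Fin (n+1) → G) :
    ∏ x ∈ (((Finset.univ.filter
        fun x : Fin (n+2) × Fin (n+1) => ¬((x.2:ℕ)+1 < (x.1:ℕ))).filter
        fun x => ¬((x.2:ℕ)+1 = (x.1:ℕ))).filter
        fun x => ¬((x.2:ℕ) = (x.1:ℕ))), TT g f v x
      = ∏ y ∈ (Finset.univ.filter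
        fun y : Fin n × Fin (n+1) => ¬((y.1:ℕ) < (y.2:ℕ))), QQ' g f v y := by
  have mem3 : ∀ x : Fin (n+2) × Fin (n+1), x ∈ (((Finset.univ.filter
        fun x : Fin (n+2) × Fin (n+1) => ¬((x.2:ℕ)+1 < (x.1:ℕ))).filter
        fun x => ¬((x.2:ℕ)+1 = (x.1:ℕ))).filter
        fun x => ¬((x.2:ℕ) = (x.1:ℕ))) → (x.1:ℕ) < (x.2:ℕ) := by
    intro x hx
    simp only [Finset.mem_filter, Finset.mem_univ, true_and] at hx
    omega
  refine Finset.prod_bij'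
    (fun x hx => ((⟨(x.2:ℕ)-1, by have := mem3 x hx; have := x.2.isLt; omega⟩ : Fin n),
      (⟨(x.1:ℕ), by have := mem3 x hx; have := x.2.isLt; omega⟩ : Fin (n+1))))
    (fun y _ => (y.2.castSucc, y.1.succ)) ?_ ?_ ?_ ?_ ?_
  · intro a ha
    have h := mem3 a ha
    simp only [Finset.mem_filter, Finset.mem_univ, true_and]
    first | omega | (simp <;> omega) | simp
  · intro y hy
    have h := (Finset.mem_filter.1 hy).2
    simp only [Finset.mem_filter, Finset.mem_univ, true_and, Fin.val_succ, Fin.coe_castSucc]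
    first | omega | (simp <;> omega) | simp
  · intro a ha
    have h := mem3 a ha
    exact Prod.ext (Fin.ext (by first | (simp <;> omega) | simp)) (Fin.ext (by first | omega | (simp <;> omega)))
  · intro y hy
    have h := (Finset.mem_filter.1 hy).2
    exact Prod.ext (Fin.ext (by first | (simp <;> omega) | simp)) (Fin.ext (by first | (simp <;> omega) | simp))
  · intro a ha
    have h := mem3 a ha
    unfold TT QQ'
    rw [contract_ins_gt g v a.1 a.2 h]
    congr 1
    exact negpow (by first | omega | (simp <;> omega))

theorem HB {n : ℕ} (g : G) (f : (Fin (n+1) → G) → M) (v : Fin (n+1) → G) :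
    (∏ p : Fin (n+2), (∏ j : Fin (n+1),
        (f (Fin.contractNth j.castSucc (· * ·) (Fin.insertNth p g v)))
          ^ ((-1:ℤ)^((j:ℕ)+1))) ^ ((-1:ℤ)^(p:ℕ)))
    * (∏ j : Fin n, (∏ i : Fin (n+1),
        (f (Fin.insertNth i g (Fin.contractNth j.castSucc (· * ·) v)))
          ^ ((-1:ℤ)^(i:ℕ))) ^ ((-1:ℤ)^((j:ℕ)+1))) = 1 := by
  have hT1 : (∏ p : Fin (n+2), (∏ j : Fin (n+1),
        (f (Fin.contractNth j.castSucc (· * ·) (Fin.insertNth p g v)))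
          ^ ((-1:ℤ)^((j:ℕ)+1))) ^ ((-1:ℤ)^(p:ℕ)))
      = ∏ x : Fin (n+2) × Fin (n+1), TT g f v x := by
    rw [Fintype.prod_prod_type]
    apply Finset.prod_congr rfl
    intro p _
    rw [prodZ]
    apply Finset.prod_congr rfl
    intro j _
    unfold TT
    rw [← zpow_mul]
    congr 1
    rw [← pow_add]
    exact negpow (by first | omega | (simp <;> omega))
  have hQ1 : (∏ j : Fin n, (∏ i : Fin (n+1),
        (f (Fin.insertNth i g (Fin.contractNth j.castSucc (· * ·) v)))
          ^ ((-1:ℤ)^(i:ℕ))) ^ ((-1:ℤ)^((j:ℕ)+1)))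
      = ∏ y : Fin n × Fin (n+1), QQ g f v y := by
    rw [Fintype.prod_prod_type]
    apply Finset.prod_congr rfl
    intro j _
    rw [prodZ]
    apply Finset.prod_congr rfl
    intro i _
    unfold QQ
    rw [← zpow_mul]
    congr 1
    rw [← pow_add]
    exact negpow (by first | omega | (simp <;> omega))
  rw [hT1, hQ1]
  have key3 : ∏ x : Fin (n+2) × Fin (n+1), TT g f v x
      = ∏ y : Fin n × Fin (n+1), QQ' g f v y := by
    rw [← Finset.prod_filter_mul_prod_filter_not Finset.univ
      (fun x : Fin (n+2) × Fin (n+1) => (x.2:ℕ)+1 < (x.1:ℕ)) (TT g f v)]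
    rw [← Finset.prod_filter_mul_prod_filter_not (Finset.univ.filter
      fun x : Fin (n+2) × Fin (n+1) => ¬((x.2:ℕ)+1 < (x.1:ℕ)))
      (fun x => (x.2:ℕ)+1 = (x.1:ℕ)) (TT g f v)]
    rw [← Finset.prod_filter_mul_prod_filter_not ((Finset.univ.filter
      fun x : Fin (n+2) × Fin (n+1) => ¬((x.2:ℕ)+1 < (x.1:ℕ))).filter
      fun x => ¬((x.2:ℕ)+1 = (x.1:ℕ)))
      (fun x => (x.2:ℕ) = (x.1:ℕ)) (TT g f v)]
    rw [← Finset.prod_filter_mul_prod_filter_not Finset.univ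
      (fun y : Fin n × Fin (n+1) => (y.1:ℕ) < (y.2:ℕ)) (QQ' g f v)]
    rw [hlt g f v, hgt g f v, hd1 g f v, hd2 g f v]
    have hcancel : (∏ j : Fin (n+1), f (Function.update v j (v j * g)))
        * (∏ j : Fin (n+1), (f (Function.update v j (v j * g)))⁻¹) = 1 := by
      rw [← Finset.prod_mul_distrib]
      simp
    calc (∏ y ∈ (Finset.univ.filter
            fun y : Fin n × Fin (n+1) => (y.1:ℕ) < (y.2:ℕ)), QQ' g f v y)
          * ((∏ j : Fin (n+1), f (Function.update v j (v j * g)))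
            * ((∏ j : Fin (n+1), (f (Function.update v j (v j * g)))⁻¹)
              * (∏ y ∈ (Finset.univ.filter
                fun y : Fin n × Fin (n+1) => ¬((y.1:ℕ) < (y.2:ℕ))), QQ' g f v y)))
        = ((∏ j : Fin (n+1), f (Function.update v j (v j * g)))
            * (∏ j : Fin (n+1), (f (Function.update v j (v j * g)))⁻¹))
          * ((∏ y ∈ (Finset.univ.filter
              fun y : Fin n × Fin (n+1) => (y.1:ℕ) < (y.2:ℕ)), QQ' g f v y)
            * (∏ y ∈ (Finset.univ.filter
              fun y : Fin n × Fin (n+1) => ¬((y.1:ℕ) < (y.2:ℕ))), QQ' g f v y)) := by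
          ac_rfl
      _ = (∏ y ∈ (Finset.univ.filter
              fun y : Fin n × Fin (n+1) => (y.1:ℕ) < (y.2:ℕ)), QQ' g f v y)
            * (∏ y ∈ (Finset.univ.filter
              fun y : Fin n × Fin (n+1) => ¬((y.1:ℕ) < (y.2:ℕ))), QQ' g f v y) := by
          rw [hcancel, one_mul]
  rw [key3, ← Finset.prod_mul_distrib]
  apply Finset.prod_eq_one
  intro y _
  unfold QQ QQ'
  rw [← zpow_add]
  have h0 : (-1:ℤ)^((y.1:ℕ)+(y.2:ℕ)) + (-1:ℤ)^((y.1:ℕ)+(y.2:ℕ)+1) = 0 := by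
    rw [pow_succ]; ring
  rw [h0, zpow_zero]

end Main2

/-! ### Assembly -/

theorem assemble {M : Type*} [CommGroup M] (a b c x pa pb pc : M)
    (hpa : pa = x * a⁻¹) (hpb : pb * b = 1) (hpc : pc = x⁻¹ * c⁻¹) :
    (a * b * c) * ((pa * pb) * pc) = 1 := by
  subst hpa hpc
  calc (a*b*c) * (((x*a⁻¹) * pb) * (x⁻¹ * c⁻¹))
      = (pb * b) * ((a*a⁻¹) * ((c*c⁻¹) * (x*x⁻¹))) := by ac_rfl
    _ = 1 := by rw [hpb]; simp

theorem key {G : Type*} [CommGroup G] {M : Type*} [CommGroup M] {n : ℕ} (g : G)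
    (f : (Fin (n+1) → G) → M) (v : Fin (n+1) → G) :
    Del (Sl g f) v * Sl g (Del f) v = 1 := by
  unfold Del Sl
  simp only [mul_zpow, Finset.prod_mul_distrib]
  exact assemble _ _ _ _ _ _ _ (HA g f v) (HB g f v) (HC g f v)

/-- For a finite abelian group `G` and an inhomogeneous cocycle `ω` of
`n + 1 ≥ 2` group variables, every slant product `ω^{(g)}` is an inhomogeneous cocycle of
`n` variables. -/
theorem slant_isCocycle {G : Type*} [CommGroup G] [Finite G] (n : ℕ) (hn : 1 ≤ n)
    (ω : (Fin (n + 1) → G) → Circle) (hω : IsInhomoCocycle ω) (g : G) :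
    IsInhomoCocycle (slant g ω) := by
  intro v
  have h2 : Del (Sl g ω) v * Sl g (Del ω) v = 1 := key g ω v
  have h1 : Sl g (Del ω) v = 1 := by
    unfold Sl
    apply Finset.prod_eq_one
    intro p _
    have hz : Del ω (Fin.insertNth p g v) = 1 := hω (Fin.insertNth p g v)
    rw [hz, one_zpow]
  have h3 : Del (Sl g ω) v = 1 := by rwa [h1, mul_one] at h2
  have hsl : Sl g ω = slant g ω := by
    funext w
    unfold Sl slant
    rw [Fin.prod_univ_succ]
    congr 1
    · rw [ins0_cons]; simp
    all_goals
      apply Finset.prod_congr rfl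
      intro i _
      congr 1
      simp [Fin.val_succ]
  rw [hsl] at h3
  exact h3
end

section
/- Let n ≥ 1, let G = (ZMod 2)ⁿ written additively with components g = (g^{(1)},…,g^{(n)}), and define ω_n : Gⁿ → Circle by ω_n(g₁,…,g_n) = (−1)^{g₁^{(1)}·g₂^{(2)}⋯g_n^{(n)}} (exponent computed from representatives in {0,1}). Let e_j ∈ G denote the element with j-th component 1 and all other components 0. Then: (i) ω_n is an inhomogeneous n-cocycle of G; (ii) the slant product satisfies ω_n^{(e₁)}(g₂,…,g_n) = (−1)^{g₂^{(2)}·g₃^{(3)}⋯g_n^{(n)}} for all g₂,…,g_n ∈ G; and (iii) the full sequential slant product is ω_n^{(e₁,e₂,…,e_n)} = −1. -/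
/-!
Write `χ(a) = (−1)^a` and `φᵢ : G → ℤ₂` for the `i`-th coordinate, so that
`ω_n = χ ∘ (φ₁ ∪ ⋯ ∪ φₙ)` with `(φ₁ ∪ ⋯ ∪ φₙ)(g₁, …, gₙ) = φ₁(g₁)⋯φₙ(gₙ)`. This cup product of
additive maps is an additive cocycle over any commutative ring: by additivity of `φⱼ`, the term
in which `gⱼ` and `gⱼ₊₁` are merged splits as the sum of the products with `gⱼ₊₁` resp. `gⱼ`
dropped, so the alternating sum telescopes. In the slant product along `e₁` every term with `e₁`
inserted in a slot `i ≥ 2` contains the factor `φᵢ(e₁) = 0`, leaving `φ₂ ∪ ⋯ ∪ φₙ`; iterating along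
the dual basis `e₁, …, eₙ` ends with the empty cup product `1`, and `χ(1) = −1`.
-/
/-- The element `−1` of the circle group. -/
noncomputable def negOne : Circle := ⟨-1, by simp [Submonoid.unitSphere, Metric.mem_sphere]⟩

/-- The inhomogeneous `n`-cocycle condition for an additively written abelian group. -/
def IsInhomoCocycleAdd {G : Type*} [AddGroup G] {n : ℕ}
    (ω : (Fin n → G) → Circle) : Prop :=
  ∀ g : Fin (n + 1) → G,
    (ω fun i => g i.succ) *
      (∏ j : Fin n,
        (ω (Fin.contractNth j.castSucc (· + ·) g)) ^ ((-1 : ℤ) ^ ((j : ℕ) + 1))) *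
      (ω fun i => g i.castSucc) ^ ((-1 : ℤ) ^ (n + 1)) = 1

/-- The slant product `i_g ω = ω^{(g)}` of an inhomogeneous cochain of `k + 1` variables
(additive group version):
`ω^{(g)}(g₁,…,g_k) = ω(g,g₁,…,g_k) · ∏_{i=1}^{k} ω(g₁,…,g_i, g, g_{i+1},…,g_k)^{(−1)^i}`. -/
noncomputable def slantAdd {G : Type*} [AddGroup G] {k : ℕ} (g : G)
    (ω : (Fin (k + 1) → G) → Circle) : (Fin k → G) → Circle :=
  fun v => ω (Fin.cons g v) *
    ∏ i : Fin k, (ω (Fin.insertNth i.succ g v)) ^ ((-1 : ℤ) ^ ((i : ℕ) + 1))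

/-- The sequential slant product `ω^{(g₁,…,g_k)} = i_{g_k}⋯i_{g₁} ω ∈ Circle`. -/
noncomputable def seqSlantAdd {G : Type*} [AddGroup G] :
    {k : ℕ} → (Fin k → G) → ((Fin k → G) → Circle) → Circle
  | 0, _, ω => ω Fin.elim0
  | _ + 1, gs, ω => seqSlantAdd (fun i => gs i.succ) (slantAdd (gs 0) ω)

/-- The inhomogeneous `n`-cochain `ω_n(g₁,…,g_n) = (−1)^{g₁^{(1)}·g₂^{(2)}⋯g_n^{(n)}}`
of `G = (ℤ₂)ⁿ` (here `n = m + 1 ≥ 1`), with the exponent computed from representatives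
in `{0,1}`. -/
noncomputable def ωdiag (m : ℕ) :
    (Fin (m + 1) → (Fin (m + 1) → ZMod 2)) → Circle :=
  fun v => negOne ^ (∏ i : Fin (m + 1), (v i i).val)

open Finset

lemma AddChar.map_sum_eq_prod {ι A M : Type*} [AddCommMonoid A] [CommMonoid M]
    (ψ : AddChar A M) (s : Finset ι) (f : ι → A) :
    ψ (∑ i ∈ s, f i) = ∏ i ∈ s, ψ (f i) := by
  have h := map_prod ψ.toMonoidHom (fun i => Multiplicative.ofAdd (f i)) s
  rwa [← ofAdd_sum] at h

lemma Fin.sum_neg_one_pow_smul_add {M : Type*} [AddCommGroup M] (P : ℕ → M) (n : ℕ) :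
    ∑ j : Fin n, ((-1 : ℤ) ^ ((j : ℕ) + 1)) • (P (j + 1) + P j) = ((-1 : ℤ) ^ n) • P n - P 0 := by
  rw [Fin.sum_univ_eq_sum_range (fun j => ((-1 : ℤ) ^ (j + 1)) • (P (j + 1) + P j))]
  induction n with
  | zero => simp
  | succ n ih =>
    rw [sum_range_succ, ih, pow_succ, smul_add]
    simp only [mul_neg_one, neg_smul]
    abel

section CupProduct

variable {G R : Type*} [AddGroup G] [CommRing R]

/-- The cup product `φ₁ ∪ ⋯ ∪ φₙ` of additive `R`-valued `1`-cocycles of `G`. -/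
def cupProd {n : ℕ} (φ : Fin n → G →+ R) (g : Fin n → G) : R :=
  ∏ i, φ i (g i)

lemma cupProd_eq_add {n : ℕ} (φ : Fin n → G →+ R) {x y z : Fin n → G} (j : Fin n)
    (hj : x j = y j + z j) (hy : ∀ i ≠ j, y i = x i) (hz : ∀ i ≠ j, z i = x i) :
    cupProd φ x = cupProd φ y + cupProd φ z := by
  classical
  have off (w : Fin n → G) (hw : ∀ i ≠ j, w i = x i) :
      ∏ i ∈ {j}ᶜ, φ i (w i) = ∏ i ∈ {j}ᶜ, φ i (x i) :=
    prod_congr rfl fun i hi => by rw [hw i (by simpa using hi)]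
  simp only [cupProd, Fintype.prod_eq_mul_prod_compl j, off y hy, off z hz, hj, map_add, add_mul]

/-- The tuple `(g₀, …, g_{t-1}, g_{t+1}, …, g_n)`: the first `t` entries of `g` are kept and
the entry `g_t` is dropped. -/
def dropAt {n : ℕ} (g : Fin (n + 1) → G) (t : ℕ) : Fin n → G :=
  fun i => if (i : ℕ) < t then g i.castSucc else g i.succ

lemma cupProd_contractNth {n : ℕ} (φ : Fin n → G →+ R) (g : Fin (n + 1) → G) (j : Fin n) :
    cupProd φ (Fin.contractNth j.castSucc (· + ·) g) =
      cupProd φ (dropAt g ((j : ℕ) + 1)) + cupProd φ (dropAt g j) := by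
  refine cupProd_eq_add φ j ?_ (fun i hi => ?_) (fun i hi => ?_)
  · simp [dropAt, Fin.contractNth_apply_of_eq]
  all_goals
    have := Fin.val_ne_of_ne hi
    simp only [dropAt, Fin.contractNth, Fin.val_castSucc]
    split_ifs <;> first | rfl | omega

theorem cupProd_coboundary {n : ℕ} (φ : Fin n → G →+ R) (g : Fin (n + 1) → G) :
    cupProd φ (fun i => g i.succ) +
      ∑ j : Fin n, ((-1 : ℤ) ^ ((j : ℕ) + 1)) • cupProd φ (Fin.contractNth j.castSucc (· + ·) g) +
      ((-1 : ℤ) ^ (n + 1)) • cupProd φ (fun i => g i.castSucc) = 0 := by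
  have h0 : (fun i => g i.succ) = dropAt g 0 := by funext i; simp [dropAt]
  have hn : (fun i => g i.castSucc) = dropAt g n := by funext i; simp [dropAt]
  rw [h0, hn]
  simp only [cupProd_contractNth]
  rw [Fin.sum_neg_one_pow_smul_add (fun t => cupProd φ (dropAt g t)), pow_succ, mul_neg_one,
    neg_smul]
  abel

theorem isInhomoCocycleAdd_cupProd (ψ : AddChar R Circle) {n : ℕ} (φ : Fin n → G →+ R) :
    IsInhomoCocycleAdd (ψ ∘ cupProd φ) := by
  intro g
  simp only [Function.comp_apply, ← AddChar.map_zsmul_eq_zpow, ← AddChar.map_sum_eq_prod,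
    ← AddChar.map_add_eq_mul, cupProd_coboundary, AddChar.map_zero_eq_one]

lemma cupProd_cons {k : ℕ} (φ : Fin (k + 1) → G →+ R) (g : G) (v : Fin k → G) :
    cupProd φ (Fin.cons g v) = φ 0 g * cupProd (fun i => φ i.succ) v := by
  simp [cupProd, Fin.prod_univ_succ]

lemma cupProd_insertNth_eq_zero {k : ℕ} (φ : Fin (k + 1) → G →+ R) {g : G} (v : Fin k → G)
    (i : Fin (k + 1)) (hg : φ i g = 0) : cupProd φ (Fin.insertNth i g v) = 0 :=
  prod_eq_zero (mem_univ i) (by rw [Fin.insertNth_apply_same, hg])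

theorem slantAdd_cupProd_apply (ψ : AddChar R Circle) {k : ℕ} (φ : Fin (k + 1) → G →+ R)
    {g : G} (hg : ∀ i : Fin k, φ i.succ g = 0) (v : Fin k → G) :
    slantAdd g (ψ ∘ cupProd φ) v = ψ (φ 0 g * cupProd (fun i => φ i.succ) v) := by
  simp [slantAdd, cupProd_cons, cupProd_insertNth_eq_zero φ v _ (hg _)]

theorem seqSlantAdd_cupProd (ψ : AddChar R Circle) :
    ∀ {k : ℕ} (φ : Fin k → G →+ R) (gs : Fin k → G),
      (∀ i j, φ i (gs j) = if i = j then 1 else 0) → seqSlantAdd gs (ψ ∘ cupProd φ) = ψ 1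
  | 0, φ, gs, _ => by simp [seqSlantAdd, cupProd]
  | k + 1, φ, gs, hdual => by
    have hslant : slantAdd (gs 0) (ψ ∘ cupProd φ) = ψ ∘ cupProd (fun i => φ i.succ) := by
      funext v
      rw [slantAdd_cupProd_apply ψ φ (fun i => by simp [hdual]) v, hdual, if_pos rfl, one_mul]
      rfl
    rw [seqSlantAdd, hslant]
    exact seqSlantAdd_cupProd ψ _ _ fun i j => by simp [hdual]

end CupProduct

lemma negOne_sq : negOne ^ 2 = 1 := by
  ext
  rw [sq, Circle.coe_mul]
  simp [negOne]

noncomputable def signChar : AddChar (ZMod 2) Circle := AddChar.zmodChar 2 negOne_sq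

lemma negOne_pow_prod_val {ι : Type*} [Fintype ι] (x : ι → ZMod 2) :
    negOne ^ (∏ i, (x i).val) = signChar (∏ i, x i) := by
  rw [signChar, ← AddChar.zmodChar_apply' negOne_sq, Nat.cast_prod]
  simp

lemma ωdiag_eq_cupProd (m : ℕ) :
    ωdiag m = signChar ∘ cupProd (Pi.evalAddMonoidHom (fun _ => ZMod 2)) := by
  funext v
  exact negOne_pow_prod_val _

/-- For `n = m + 1 ≥ 1` and `G = (ℤ₂)ⁿ`:
(i) `ω_n(g₁,…,g_n) = (−1)^{g₁^{(1)}⋯g_n^{(n)}}` is an inhomogeneous `n`-cocycle;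
(ii) its slant product along `e₁` is
`ω_n^{(e₁)}(g₂,…,g_n) = (−1)^{g₂^{(2)}·g₃^{(3)}⋯g_n^{(n)}}`;
(iii) the full sequential slant product is `ω_n^{(e₁,…,e_n)} = −1`. -/
theorem ωdiag_slant_products (m : ℕ) :
    IsInhomoCocycleAdd (ωdiag m) ∧
    (∀ v : Fin m → (Fin (m + 1) → ZMod 2),
      slantAdd (Pi.single (0 : Fin (m + 1)) (1 : ZMod 2)) (ωdiag m) v =
        negOne ^ (∏ i : Fin m, (v i i.succ).val)) ∧
    seqSlantAdd (fun j : Fin (m + 1) => Pi.single j (1 : ZMod 2)) (ωdiag m) = negOne := by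
  rw [ωdiag_eq_cupProd]
  refine ⟨isInhomoCocycleAdd_cupProd _ _, fun v => ?_, ?_⟩
  · rw [slantAdd_cupProd_apply _ _ (fun i => by simp), negOne_pow_prod_val]
    simp [cupProd]
  · rw [seqSlantAdd_cupProd _ _ _ fun i j => Pi.single_apply j 1 i]
    simpa [signChar] using AddChar.zmodChar_apply' negOne_sq 1
end

section
/- Let m ≥ 1 and consider the complex vector space H = ((Fin m → Bool) → ℂ). Define the invertible linear maps D by (D f)(x) = (−1)^{x₁·x₂⋯x_m} f(x) (where x_i ∈ {0,1} is the i-th bit, i.e. D is the (m−1)-fold controlled-Z gate) and, for each j, X_j by (X_j f)(x) = f(x with the j-th bit flipped). Then the m-fold sequential group commutator satisfies K(⋯K(K(D, X₁), X₂)⋯, X_m) = −id, where K(A,B) = A⁻¹ ∘ B⁻¹ ∘ A ∘ B. -/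
/-- The `(m−1)`-fold controlled-`Z` gate `(D f)(x) = (−1)^{x₁·x₂⋯x_m}·f(x)` on
`(Fin m → Bool) → ℂ`, as an invertible linear map. -/
noncomputable def Dop (m : ℕ) :
    ((Fin m → Bool) → ℂ) ≃ₗ[ℂ] ((Fin m → Bool) → ℂ) where
  toFun f := fun x => (-1 : ℂ) ^ (∏ i : Fin m, (if x i then 1 else 0 : ℕ)) * f x
  invFun f := fun x => (-1 : ℂ) ^ (∏ i : Fin m, (if x i then 1 else 0 : ℕ)) * f x
  map_add' f f' := by funext x; simp [mul_add]
  map_smul' c f := by funext x; simp; ring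
  left_inv f := by
    funext x
    show (-1 : ℂ) ^ (∏ i : Fin m, (if x i then 1 else 0 : ℕ)) *
      ((-1 : ℂ) ^ (∏ i : Fin m, (if x i then 1 else 0 : ℕ)) * f x) = f x
    rw [← mul_assoc, ← pow_add, Even.neg_one_pow ⟨_, rfl⟩, one_mul]
  right_inv f := by
    funext x
    show (-1 : ℂ) ^ (∏ i : Fin m, (if x i then 1 else 0 : ℕ)) *
      ((-1 : ℂ) ^ (∏ i : Fin m, (if x i then 1 else 0 : ℕ)) * f x) = f x
    rw [← mul_assoc, ← pow_add, Even.neg_one_pow ⟨_, rfl⟩, one_mul]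

/-- The bit-flip (Pauli `X`) operator on the `j`-th qubit,
`(X_j f)(x) = f(x with the j-th bit flipped)`, as an invertible linear map. -/
noncomputable def Xop {m : ℕ} (j : Fin m) :
    ((Fin m → Bool) → ℂ) ≃ₗ[ℂ] ((Fin m → Bool) → ℂ) where
  toFun f := fun x => f (Function.update x j (!(x j)))
  invFun f := fun x => f (Function.update x j (!(x j)))
  map_add' f f' := rfl
  map_smul' c f := rfl
  left_inv f := by
    funext x
    simp
  right_inv f := by
    funext x
    simp

/-- The group commutator `K(A,B) = A⁻¹ ∘ B⁻¹ ∘ A ∘ B` of invertible linear maps. -/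
def Kc {R M : Type*} [CommRing R] [AddCommGroup M] [Module R M]
    (A B : M ≃ₗ[R] M) : M ≃ₗ[R] M :=
  B.trans (A.trans (B.symm.trans A.symm))

/-! Both operators are signed permutation matrices: `D` is the diagonal sign operator
`(−1)^{E(x)}` with `E(x) = ∏ᵢ xᵢ`, and `X_j` permutes the basis by flipping bit `j`.
Commuting a diagonal sign operator `(−1)^E` with a basis permutation `σ` gives the diagonal sign
operator `(−1)^{E + E ∘ σ⁻¹}`. For `E = ∏_{i ∈ s} xᵢ` and `σ` the flip of a bit `j ∈ s`,
exactly one of `E(x)`, `E(σ x)` vanishes, so `E + E ∘ σ = ∏_{i ∈ s ∖ {j}} xᵢ`: each commutator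
removes one bit from the product. After all `m` flips the exponent is the empty product `1`,
and the operator is `−id`. -/

section SignDiagonal

variable {R α : Type*} [CommRing R]

noncomputable def signDiag (E : α → ℕ) : (α → R) ≃ₗ[R] (α → R) :=
  LinearEquiv.ofInvolutive
    { toFun := fun f x => (-1) ^ E x * f x
      map_add' := fun f g => funext fun x => mul_add _ (f x) (g x)
      map_smul' := fun c f => funext fun x => mul_left_comm _ c (f x) }
    fun f => funext fun x => by
      simp [← mul_assoc, ← pow_add, Even.neg_one_pow ⟨E x, rfl⟩]

@[simp]
theorem signDiag_apply (E : α → ℕ) (f : α → R) (x : α) :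
    signDiag E f x = (-1) ^ E x * f x := rfl

@[simp]
theorem signDiag_symm (E : α → ℕ) : (signDiag E : (α → R) ≃ₗ[R] (α → R)).symm = signDiag E :=
  rfl

theorem commutator_signDiag_funCongrLeft (E : α → ℕ) (e : Equiv.Perm α) :
    Kc (signDiag E) (LinearEquiv.funCongrLeft R R e) =
      signDiag fun x => E x + E (e.symm x) := by
  ext f x
  simp [Kc, LinearMap.funLeft, pow_add, mul_assoc]

end SignDiagonal

section BitFlip

variable {ι : Type*} [DecidableEq ι]

def bitFlip (j : ι) : Equiv.Perm (ι → Bool) :=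
  Function.Involutive.toPerm (fun x => Function.update x j (!x j)) fun x => by simp

theorem bitFlip_symm (j : ι) : (bitFlip j).symm = bitFlip j := rfl

@[simp]
theorem bitFlip_apply_self (j : ι) (x : ι → Bool) : bitFlip j x j = !x j :=
  Function.update_self j _ x

@[simp]
theorem bitFlip_apply_of_ne {i j : ι} (h : i ≠ j) (x : ι → Bool) : bitFlip j x i = x i :=
  Function.update_of_ne h _ x

def bitProd (s : Finset ι) (x : ι → Bool) : ℕ :=
  ∏ i ∈ s, if x i then 1 else 0

theorem bitProd_add_bitProd_bitFlip {s : Finset ι} {j : ι} (hj : j ∈ s) (x : ι → Bool) :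
    bitProd s x + bitProd s (bitFlip j x) = bitProd (s.erase j) x := by
  have hrest : bitProd (s.erase j) (bitFlip j x) = bitProd (s.erase j) x :=
    Finset.prod_congr rfl fun i hi => by
      rw [bitFlip_apply_of_ne (Finset.ne_of_mem_erase hi)]
  simp only [bitProd] at hrest ⊢
  rw [← Finset.mul_prod_erase s _ hj, ← Finset.mul_prod_erase s _ hj, hrest]
  cases hx : x j <;> simp [hx]

theorem foldl_commutator_signDiag_bitProd {R : Type*} [CommRing R] (l : List ι) (hl : l.Nodup)
    (s : Finset ι) (hls : ∀ j ∈ l, j ∈ s) :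
    List.foldl Kc (signDiag (bitProd s))
        (l.map fun j => LinearEquiv.funCongrLeft R R (bitFlip j)) =
      signDiag (bitProd (s \ l.toFinset)) := by
  induction l generalizing s with
  | nil => simp
  | cons j l ih =>
    obtain ⟨hjl, hl⟩ := List.nodup_cons.mp hl
    have hstep : (fun x => bitProd s x + bitProd s (bitFlip j x)) = bitProd (s.erase j) :=
      funext (bitProd_add_bitProd_bitFlip (hls j List.mem_cons_self))
    have hls' : ∀ i ∈ l, i ∈ s.erase j := fun i hi =>
      Finset.mem_erase.mpr ⟨ne_of_mem_of_not_mem hi hjl, hls i (List.mem_cons_of_mem j hi)⟩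
    rw [List.map_cons, List.foldl_cons, commutator_signDiag_funCongrLeft, bitFlip_symm, hstep, ih hl _ hls',
      List.toFinset_cons, Finset.sdiff_insert, Finset.erase_sdiff_comm]

end BitFlip

theorem seq_commutator_CZ_eq_neg_id_general (m : ℕ) :
    ∀ f : (Fin m → Bool) → ℂ,
      (List.foldl Kc (Dop m) (List.ofFn fun j : Fin m => Xop j)) f = -f := by
  have hD : Dop m = signDiag (bitProd Finset.univ) := rfl
  have hX : (fun j : Fin m => Xop j) = fun j => LinearEquiv.funCongrLeft ℂ ℂ (bitFlip j) := rfl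
  intro f
  rw [hD, hX, List.ofFn_eq_map, foldl_commutator_signDiag_bitProd _ (List.nodup_finRange m)
    Finset.univ fun j _ => Finset.mem_univ j, List.toFinset_finRange, Finset.sdiff_self]
  ext x
  simp [bitProd]

/-- For `m ≥ 1`, the `m`-fold sequential group commutator of the
`(m−1)`-fold controlled-`Z` gate with the bit-flip operators `X₁, …, X_m` is `−id`:
`K(⋯K(K(D,X₁),X₂)⋯,X_m) = −id`. -/
theorem seq_commutator_CZ_eq_neg_id (m : ℕ) (hm : 1 ≤ m) :
    ∀ f : (Fin m → Bool) → ℂ,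
      (List.foldl Kc (Dop m) (List.ofFn fun j : Fin m => Xop j)) f = -f :=
  seq_commutator_CZ_eq_neg_id_general m
end
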